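/- Let p > 1 be an odd integer. There exist constants c > 0, C > 0, and N₀ ≥ 1 (depending only on p) such that for every real N ≥ N₀ and every collection of signs ε₁, …, ε_p ∈ {+1, −1} and points a₁, …, a_p ∈ A_N with ε₁a₁ + ⋯ + ε_p a_p ∈ I_p, one has cN² ≤ −(ε₁λ(a₁) + ⋯ + ε_pλ(a_p)) ≤ CN². -/
import Mathlib


noncomputable def lam (x : ℝ) : ℝ := Real.sqrt (x ^ 2 + x ^ 4)

def AtildeN (p : ℕ) (N : ℝ) : Set ℝ :=
  Set.Icc (N + 3 * ((p : ℝ) - 1) / (2 * (p : ℝ) ^ 2))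
          (N + 3 * ((p : ℝ) + 2) / (2 * (p : ℝ) ^ 2))

def Atilde2N (p : ℕ) (N : ℝ) : Set ℝ :=
  Set.Icc (2 * N) (2 * N + 3 / (p : ℝ) ^ 2)

def AN (p : ℕ) (N : ℝ) : Set ℝ := AtildeN p N ∪ Atilde2N p N

def Ip (p : ℕ) : Set ℝ :=
  if p % 3 = 0 then Set.Icc (1 - 2 / (p : ℝ)) (1 + 2 / (p : ℝ))
  else if p % 3 = 1 then
    Set.Icc (1 - 3 / (p : ℝ) - 4 / (p : ℝ) ^ 2) (1 - 2 / (p : ℝ) - 8 / (p : ℝ) ^ 2)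
  else Set.Icc (1 - 4 / (p : ℝ) + 4 / (p : ℝ) ^ 2) (1 - 4 / (p : ℝ) ^ 2)

lemma lam_ge (x : ℝ) : x ^ 2 ≤ lam x := by
  have h : (x ^ 2) ^ 2 ≤ x ^ 2 + x ^ 4 := by nlinarith [sq_nonneg x]
  calc x ^ 2 = Real.sqrt ((x ^ 2) ^ 2) := (Real.sqrt_sq (sq_nonneg x)).symm
    _ ≤ Real.sqrt (x ^ 2 + x ^ 4) := Real.sqrt_le_sqrt h

lemma lam_le (x : ℝ) : lam x ≤ x ^ 2 + 1 / 2 := by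
  have h : x ^ 2 + x ^ 4 ≤ (x ^ 2 + 1 / 2) ^ 2 := by nlinarith [sq_nonneg x]
  calc lam x ≤ Real.sqrt ((x ^ 2 + 1 / 2) ^ 2) := Real.sqrt_le_sqrt h
    _ = x ^ 2 + 1 / 2 := Real.sqrt_sq (by positivity)

lemma Ip_bounds (p : ℕ) (hp1 : 1 < p) (hpodd : Odd p) :
    ∀ x ∈ Ip p, 0 < x ∧ x ≤ 3 := by
  obtain ⟨k, hk⟩ := hpodd
  have hp3 : 3 ≤ p := by omega
  have hP3 : (3 : ℝ) ≤ (p : ℝ) := by exact_mod_cast hp3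
  have hP0 : (0 : ℝ) < (p : ℝ) := by linarith
  intro x hx
  unfold Ip at hx
  split_ifs at hx with h0 h1
  · rw [Set.mem_Icc] at hx
    have h2 : 2 / (p : ℝ) ≤ 2 / 3 := by
      apply div_le_div_of_nonneg_left (by norm_num) (by norm_num) hP3
    constructor <;> [linarith [hx.1]; linarith [hx.2]]
  · have hp7 : 7 ≤ p := by omega
    have hP7 : (7 : ℝ) ≤ (p : ℝ) := by exact_mod_cast hp7
    rw [Set.mem_Icc] at hx
    have h3 : 3 / (p : ℝ) ≤ 3 / 7 := by
      apply div_le_div_of_nonneg_left (by norm_num) (by norm_num) hP7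
    have h4 : 4 / (p : ℝ) ^ 2 ≤ 4 / 49 := by
      apply div_le_div_of_nonneg_left (by norm_num) (by norm_num) (by nlinarith)
    have h8 : 0 < 8 / (p : ℝ) ^ 2 := by positivity
    have h2 : 0 < 2 / (p : ℝ) := by positivity
    constructor <;> [linarith [hx.1]; linarith [hx.2]]
  · rw [Set.mem_Icc] at hx
    have hne : (p : ℝ) ≠ 0 := ne_of_gt hP0
    have hsq : 0 < (1 - 2 / (p : ℝ)) ^ 2 := by
      have : (2 : ℝ) / (p : ℝ) ≤ 2 / 3 := by
        apply div_le_div_of_nonneg_left (by norm_num) (by norm_num) hP3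
      nlinarith
    have heq : 1 - 4 / (p : ℝ) + 4 / (p : ℝ) ^ 2 = (1 - 2 / (p : ℝ)) ^ 2 := by
      field_simp; ring
    have h45 : 0 < 4 / (p : ℝ) ^ 2 := by positivity
    constructor
    · linarith [hx.1, heq ▸ hsq]
    · linarith [hx.2]

set_option maxHeartbeats 1000000 in
theorem resonance_odd_comparable_Nsq (p : ℕ) (hp1 : 1 < p) (hpodd : Odd p) :
    ∃ c > (0 : ℝ), ∃ C > (0 : ℝ), ∃ N₀ ≥ (1 : ℝ), ∀ N : ℝ, N₀ ≤ N →
      ∀ ε a : Fin p → ℝ, (∀ j, ε j = 1 ∨ ε j = -1) → (∀ j, a j ∈ AN p N) →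
        (∑ j, ε j * a j) ∈ Ip p →
        c * N ^ 2 ≤ -(∑ j, ε j * lam (a j)) ∧ -(∑ j, ε j * lam (a j)) ≤ C * N ^ 2 := by
  classical
  obtain ⟨kodd, hkodd⟩ := id hpodd
  have hp3 : 3 ≤ p := by omega
  have hP3 : (3 : ℝ) ≤ (p : ℝ) := by exact_mod_cast hp3
  have hP0 : (0 : ℝ) < (p : ℝ) := by linarith
  have hPne : (p : ℝ) ≠ 0 := ne_of_gt hP0
  have hP2 : (0 : ℝ) < (p : ℝ) ^ 2 := by positivity
  refine ⟨1, one_pos, 3 * (p : ℝ), by positivity, 8 * (p : ℝ), by linarith, ?_⟩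
  intro N hN ε a hε ha hsum
  set P : ℝ := (p : ℝ) with hPdef
  have hN1 : (1 : ℝ) ≤ N := by linarith
  have hN0 : (0 : ℝ) < N := by linarith
  -- integer sign and level functions
  set e : Fin p → ℤ := fun j => if ε j = 1 then 1 else -1 with he_def
  have he : ∀ j, ((e j : ℝ)) = ε j := by
    intro j
    rcases hε j with h | h <;> norm_num [he_def, h]
  have he1 : ∀ j, e j = 1 ∨ e j = -1 := by
    intro j
    rcases hε j with h | h <;> norm_num [he_def, h]
  set μ : Fin p → ℤ := fun j => if a j ∈ AtildeN p N then 1 else 2 with hμ_def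
  set r : Fin p → ℝ := fun j => a j - (μ j : ℝ) * N with hr_def
  have hstruct : ∀ j, (μ j = 1 ∧ N + 3 * (P - 1) / (2 * P ^ 2) ≤ a j ∧
        a j ≤ N + 3 * (P + 2) / (2 * P ^ 2))
      ∨ (μ j = 2 ∧ 2 * N ≤ a j ∧ a j ≤ 2 * N + 3 / P ^ 2) := by
    intro j
    by_cases h : a j ∈ AtildeN p N
    · left
      rw [AtildeN, Set.mem_Icc] at h
      exact ⟨if_pos h, h.1, h.2⟩
    · right
      rcases ha j with h' | h'
      · exact absurd h' h
      · rw [Atilde2N, Set.mem_Icc] at h'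
        exact ⟨if_neg h, h'.1, h'.2⟩
  have haj : ∀ j, a j = (μ j : ℝ) * N + r j := by
    intro j; simp [hr_def]
  have hrb : ∀ j, 0 ≤ r j ∧ r j ≤ 1 := by
    intro j
    have hlow : 0 ≤ 3 * (P - 1) / (2 * P ^ 2) := by
      apply div_nonneg <;> nlinarith
    have hup : 3 * (P + 2) / (2 * P ^ 2) ≤ 1 := by
      rw [div_le_one (by positivity)]; nlinarith
    have hup2 : 3 / P ^ 2 ≤ 1 := by
      rw [div_le_one (by positivity)]; nlinarith
    rcases hstruct j with ⟨h1, hl, hu⟩ | ⟨h2, hl, hu⟩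
    · rw [hr_def]; simp only [h1]; push_cast; constructor <;> linarith
    · rw [hr_def]; simp only [h2]; push_cast; constructor <;> linarith
  -- integer sums
  set E : ℤ := ∑ j, e j with hE_def
  set V : ℤ := ∑ j, e j * (μ j - 1) with hV_def
  set K : ℤ := ∑ j, e j * μ j with hK_def
  have hKEV : K = E + V := by
    rw [hK_def, hE_def, hV_def, ← Finset.sum_add_distrib]
    exact Finset.sum_congr rfl fun j _ => by ring
  -- sum splitting over reals
  have hsum_eμ : ∑ j, ε j * (μ j : ℝ) = (K : ℝ) := by
    rw [hK_def]; push_cast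
    exact Finset.sum_congr rfl fun j _ => by rw [he]
  have hsum_e : ∑ j, ε j = (E : ℝ) := by
    rw [hE_def]; push_cast
    exact Finset.sum_congr rfl fun j _ => (he j).symm
  have hsum_eμ1 : ∑ j, ε j * ((μ j : ℝ) - 1) = (V : ℝ) := by
    rw [hV_def]; push_cast
    exact Finset.sum_congr rfl fun j _ => by rw [he]
  have hsplit : ∑ j, ε j * a j = (K : ℝ) * N + ∑ j, ε j * r j := by
    rw [← hsum_eμ, Finset.sum_mul, ← Finset.sum_add_distrib]
    exact Finset.sum_congr rfl fun j _ => by rw [haj j]; ring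
  have habsr : |∑ j, ε j * r j| ≤ P := by
    calc |∑ j, ε j * r j| ≤ ∑ j, |ε j * r j| := Finset.abs_sum_le_sum_abs _ _
      _ ≤ ∑ _j : Fin p, (1 : ℝ) := by
          apply Finset.sum_le_sum
          intro j _
          rw [abs_mul]
          rcases hε j with h | h <;>
            simp [h, abs_of_nonneg (hrb j).1, (hrb j).2]
      _ = P := by simp [hPdef]
  have hIb := Ip_bounds p hp1 hpodd _ hsum
  have hK0 : K = 0 := by
    by_contra hK0
    have h1K : (1 : ℤ) ≤ |K| := by
      have := abs_pos.mpr hK0; omega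
    have h1KR : (1 : ℝ) ≤ |(K : ℝ)| := by exact_mod_cast h1K
    have : |(K : ℝ) * N| ≤ 3 + P := by
      have : (K : ℝ) * N = (∑ j, ε j * a j) - ∑ j, ε j * r j := by
        rw [hsplit]; ring
      rw [this]
      have h2 : |∑ j, ε j * a j| ≤ 3 := by
        rw [abs_le]; exact ⟨by linarith [hIb.1], hIb.2⟩
      calc |(∑ j, ε j * a j) - ∑ j, ε j * r j|
          ≤ |∑ j, ε j * a j| + |∑ j, ε j * r j| := by
            rw [sub_eq_add_neg]
            exact (abs_add_le _ _).trans (by rw [abs_neg])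
        _ ≤ 3 + P := by linarith
    rw [abs_mul, abs_of_pos hN0] at this
    nlinarith
  have hEV : E = -V := by omega
  -- parity: V is odd, hence nonzero
  have hVodd : V % 2 = 1 := by
    have hEmod : E % 2 = 1 := by
      rw [hE_def, Finset.sum_int_mod]
      have : ∀ j ∈ (Finset.univ : Finset (Fin p)), e j % 2 = 1 % 2 := by
        intro j _
        rcases he1 j with h | h <;> simp [h]
      rw [Finset.sum_congr rfl this]
      simp
      omega
    omega
  have hVne : V ≠ 0 := by omega
  have hVabs : |V| ≤ (p : ℤ) := by
    calc |V| ≤ ∑ j, |e j * (μ j - 1)| := hV_def ▸ Finset.abs_sum_le_sum_abs _ _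
      _ ≤ ∑ _j : Fin p, (1 : ℤ) := by
          apply Finset.sum_le_sum
          intro j _
          rcases he1 j with h | h <;> rcases hstruct j with ⟨h2, _⟩ | ⟨h2, _⟩ <;>
            simp [h, h2]
      _ = (p : ℤ) := by simp
  -- sign of V
  have hVneg : V ≤ -1 := by
    by_contra hc
    have hV1 : 1 ≤ V := by omega
    have hV1R : (1 : ℝ) ≤ (V : ℝ) := by exact_mod_cast hV1
    have hkey : ∀ j, ε j * r j ≤ ε j * (3 * (2 * P + 1) / (4 * P ^ 2)) +
        (ε j * ((μ j : ℝ) - 1)) * (3 / (2 * P ^ 2) - 3 * (2 * P + 1) / (4 * P ^ 2)) +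
        9 / (4 * P ^ 2) := by
      intro j
      have eq1 : 3 * (P + 2) / (2 * P ^ 2) = 3 * (2 * P + 1) / (4 * P ^ 2) + 9 / (4 * P ^ 2) := by
        field_simp; ring
      have eq2 : -(3 * (P - 1) / (2 * P ^ 2)) = -(3 * (2 * P + 1) / (4 * P ^ 2)) + 9 / (4 * P ^ 2) := by
        field_simp; ring
      have eq3 : (3 : ℝ) / P ^ 2 = 3 / (2 * P ^ 2) + 3 / (2 * P ^ 2) := by
        field_simp; ring
      have eq4 : (3 : ℝ) / (2 * P ^ 2) ≤ 9 / (4 * P ^ 2) := by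
        rw [div_le_div_iff₀ (by positivity) (by positivity)]; nlinarith
      rcases hstruct j with ⟨h1, hl, hu⟩ | ⟨h1, hl, hu⟩
      · rcases hε j with hej | hej
        · simp only [hr_def, h1, hej]; push_cast; linarith [eq1, hu]
        · simp only [hr_def, h1, hej]; push_cast; linarith [eq2, hl]
      · rcases hε j with hej | hej
        · simp only [hr_def, h1, hej]; push_cast; linarith [eq3, eq4, hu]
        · simp only [hr_def, h1, hej]; push_cast; linarith [eq4, hl]
    have hsumkey := Finset.sum_le_sum fun j (_ : j ∈ Finset.univ) => hkey j
    rw [Finset.sum_add_distrib, Finset.sum_add_distrib, ← Finset.sum_mul, ← Finset.sum_mul,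
      hsum_e, hsum_eμ1, Finset.sum_const, Finset.card_univ, Fintype.card_fin] at hsumkey
    have hEVR : (E : ℝ) = -(V : ℝ) := by exact_mod_cast congrArg (Int.cast : ℤ → ℝ) hEV
    rw [hEVR] at hsumkey
    have hrewrite : -(V : ℝ) * (3 * (2 * P + 1) / (4 * P ^ 2)) +
        (V : ℝ) * (3 / (2 * P ^ 2) - 3 * (2 * P + 1) / (4 * P ^ 2)) +
        (p : ℕ) • (9 / (4 * P ^ 2)) = -(3 / P) * (V : ℝ) + 9 / (4 * P) := by
      rw [nsmul_eq_mul]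
      field_simp
      ring
    rw [hrewrite] at hsumkey
    have hfin : ∑ j, ε j * r j ≤ -3 / (4 * P) := by
      have h1 : -(3 / P) * (V : ℝ) ≤ -(3 / P) := by nlinarith [div_pos (by norm_num : (0:ℝ) < 3) hP0]
      have h2 : -(3 / P) + 9 / (4 * P) = -3 / (4 * P) := by field_simp; ring
      linarith
    have hzero : 0 < ∑ j, ε j * r j := by
      have : ∑ j, ε j * a j = ∑ j, ε j * r j := by
        rw [hsplit, hK0]; push_cast; ring
      linarith [hIb.1, this ▸ hIb.1]
    have hlt : (0:ℝ) < -3 / (4 * P) := lt_of_lt_of_le hzero hfin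
    have heqq : (-3 : ℝ) / (4 * P) = -(3 / (4 * P)) := by ring
    have hpos : (0:ℝ) < 3 / (4 * P) := by positivity
    rw [heqq] at hlt
    linarith
  have hVR1 : (V : ℝ) ≤ -1 := by exact_mod_cast hVneg
  have hVRabs : -(V : ℝ) ≤ P := by
    obtain ⟨hv1, hv2⟩ := abs_le.mp hVabs
    have : -V ≤ (p : ℤ) := by omega
    rw [hPdef]
    exact_mod_cast this
  -- decompose the lambda sum
  set T₁ : ℝ := ∑ j, ε j * (μ j : ℝ) * r j with hT1_def
  set T₂ : ℝ := ∑ j, ε j * (r j) ^ 2 with hT2_def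
  set T₃ : ℝ := ∑ j, ε j * (lam (a j) - (a j) ^ 2) with hT3_def
  have hT1b : |T₁| ≤ 2 * P := by
    calc |T₁| ≤ ∑ j, |ε j * (μ j : ℝ) * r j| := hT1_def ▸ Finset.abs_sum_le_sum_abs _ _
      _ ≤ ∑ _j : Fin p, (2 : ℝ) := by
          apply Finset.sum_le_sum
          intro j _
          rcases hε j with h | h <;> rcases hstruct j with ⟨h2, _⟩ | ⟨h2, _⟩ <;>
            · rw [abs_mul, abs_mul]
              simp only [h, h2]
              push_cast
              rw [abs_of_nonneg (hrb j).1]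
              simp
              nlinarith [(hrb j).1, (hrb j).2]
      _ = 2 * P := by simp [hPdef]; ring
  have hT2b : |T₂| ≤ P := by
    calc |T₂| ≤ ∑ j, |ε j * (r j) ^ 2| := hT2_def ▸ Finset.abs_sum_le_sum_abs _ _
      _ ≤ ∑ _j : Fin p, (1 : ℝ) := by
          apply Finset.sum_le_sum
          intro j _
          rw [abs_mul]
          rcases hε j with h | h <;>
            · simp only [h]
              rw [abs_of_nonneg (sq_nonneg (r j))]
              simp
              exact abs_le.mpr ⟨by linarith [(hrb j).1], (hrb j).2⟩
      _ = P := by simp [hPdef]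
  have hT3b : |T₃| ≤ P / 2 := by
    calc |T₃| ≤ ∑ j, |ε j * (lam (a j) - (a j) ^ 2)| := hT3_def ▸ Finset.abs_sum_le_sum_abs _ _
      _ ≤ ∑ _j : Fin p, (1 / 2 : ℝ) := by
          apply Finset.sum_le_sum
          intro j _
          rw [abs_mul]
          rcases hε j with h | h <;>
            · simp only [h]
              rw [abs_of_nonneg (by linarith [lam_ge (a j)] : 0 ≤ lam (a j) - (a j) ^ 2)]
              simp
              linarith [lam_ge (a j), lam_le (a j)]
      _ = P / 2 := by simp [hPdef]; ring
  have hμsq : ∀ j, ((μ j : ℝ)) ^ 2 = 3 * (μ j : ℝ) - 2 := by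
    intro j
    rcases hstruct j with ⟨h1, _⟩ | ⟨h1, _⟩ <;> rw [h1] <;> norm_num
  have hsq_sum : ∑ j, ε j * (a j) ^ 2 = 2 * (V : ℝ) * N ^ 2 + T₁ * (2 * N) + T₂ := by
    have hterm : ∀ j, ε j * (a j) ^ 2 =
        (ε j * (μ j : ℝ)) * (3 * N ^ 2) - ε j * (2 * N ^ 2) +
        (ε j * (μ j : ℝ) * r j) * (2 * N) + ε j * (r j) ^ 2 := by
      intro j
      rw [haj j]
      linear_combination (ε j * N ^ 2) * hμsq j
    calc ∑ j, ε j * (a j) ^ 2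
        = ∑ j, ((ε j * (μ j : ℝ)) * (3 * N ^ 2) - ε j * (2 * N ^ 2) +
            (ε j * (μ j : ℝ) * r j) * (2 * N) + ε j * (r j) ^ 2) :=
          Finset.sum_congr rfl fun j _ => hterm j
      _ = (∑ j, ε j * (μ j : ℝ)) * (3 * N ^ 2) - (∑ j, ε j) * (2 * N ^ 2) +
            (∑ j, ε j * (μ j : ℝ) * r j) * (2 * N) + ∑ j, ε j * (r j) ^ 2 := by
          rw [Finset.sum_add_distrib, Finset.sum_add_distrib, Finset.sum_sub_distrib,
            ← Finset.sum_mul, ← Finset.sum_mul, ← Finset.sum_mul]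
      _ = 2 * (V : ℝ) * N ^ 2 + T₁ * (2 * N) + T₂ := by
          rw [hsum_eμ, hsum_e, hK0]
          have hEVR : (E : ℝ) = -(V : ℝ) := by exact_mod_cast congrArg (Int.cast : ℤ → ℝ) hEV
          rw [hEVR, hT1_def, hT2_def]
          push_cast
          ring
  have hlam_sum : ∑ j, ε j * lam (a j) = 2 * (V : ℝ) * N ^ 2 + T₁ * (2 * N) + T₂ + T₃ := by
    have : ∑ j, ε j * lam (a j) = ∑ j, (ε j * (a j) ^ 2 + ε j * (lam (a j) - (a j) ^ 2)) :=
      Finset.sum_congr rfl fun j _ => by ring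
    rw [this, Finset.sum_add_distrib, hsq_sum, ← hT3_def]
  rw [hlam_sum]
  have hNP : 8 * P ≤ N := hN
  constructor
  · nlinarith [abs_le.1 hT1b, abs_le.1 hT2b, abs_le.1 hT3b]
  · nlinarith [abs_le.1 hT1b, abs_le.1 hT2b, abs_le.1 hT3b]
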